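/- arXiv:2308.13570 — 2 statements merged into one kernel-verified Lean document; each statement's English description precedes it below -/
import Mathlib

section
/- Let f be differentiable on [a,b] and suppose that for every ε > 0 there is a differentiable function F_ε with ‖F_ε - f‖_{L²} < ε, ‖F_ε' - f'‖_{L²} < ε, Z(F_ε' - (F_ε' - f')) = Z(F_ε'), and with extremum counts Z(F_ε') uniformly bounded by some N. If MC(F_ε) ≤ C for all ε, then MC(f) ≤ C. -/
/-!
On `[a, b]`, `∫ |f'|` is approximated from below by the sums `∑ |f (tᵢ₊₁) - f (tᵢ)|` over fine
uniform partitions: approximate `f'` in `L¹` by a continuous function, which is nearly constant on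
each short cell. If `F` is `L²`-close to `f`, then every short window contains a point where `F` is
uniformly close to `f`; moving the partition points there changes the sum for `f` little (by
uniform continuity of `f`), and the sum for `F` is at most `∫ |F'|`. So `∫ |f'| ≤ ∫ |F'| + δ` for
`F` close enough to `f`, and multiplying by `Z(f) = Z(F)` gives `MC f ≤ MC F + Z(f) δ ≤ C + Z(f) δ`.
-/

open MeasureTheory

/-- Number of local extremum points of `g` in the open interval `(a, b)`. -/
noncomputable def Zcount (a b : ℝ) (g : ℝ → ℝ) : ℕ :=
  {x | x ∈ Set.Ioo a b ∧ IsLocalExtr g x}.ncard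

/-- Model complexity of a function `g` with derivative `d` on `[a, b]`. -/
noncomputable def MC (a b : ℝ) (g d : ℝ → ℝ) : ℝ :=
  (Zcount a b g : ℝ) * ∫ x in a..b, |d x|

open Set intervalIntegral

section

variable {a b : ℝ}

noncomputable def uniformPartition (a b : ℝ) (m i : ℕ) : ℝ := a + i * ((b - a) / m)

lemma uniformPartition_zero (m : ℕ) : uniformPartition a b m 0 = a := by
  simp [uniformPartition]

lemma uniformPartition_self {m : ℕ} (hm : m ≠ 0) : uniformPartition a b m m = b := by
  simp only [uniformPartition]; field_simp; ring

lemma uniformPartition_sub {m i j : ℕ} (hij : i ≤ j) :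
    uniformPartition a b m j - uniformPartition a b m i = (j - i : ℕ) * ((b - a) / m) := by
  simp only [uniformPartition, Nat.cast_sub hij]; ring

lemma uniformPartition_succ (m i : ℕ) :
    uniformPartition a b m (i + 1) = uniformPartition a b m i + (b - a) / m := by
  simp only [uniformPartition]; push_cast; ring

lemma uniformPartition_mem_Icc (hab : a ≤ b) {m i : ℕ} (hi : i ≤ m) :
    uniformPartition a b m i ∈ Icc a b := by
  rcases Nat.eq_zero_or_pos m with rfl | hm
  · simp [uniformPartition, hab]
  have hw : 0 ≤ (b - a) / m := div_nonneg (sub_nonneg.2 hab) m.cast_nonneg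
  have hb := uniformPartition_sub (a := a) (b := b) (m := m) hi
  rw [uniformPartition_self hm.ne'] at hb
  exact ⟨le_add_of_nonneg_right (mul_nonneg i.cast_nonneg hw),
    by linarith [mul_nonneg (m - i : ℕ).cast_nonneg hw]⟩

end

lemma integral_abs_le_abs_integral_add_integral_abs_sub {φ : ℝ → ℝ} {c d : ℝ} (hcd : c ≤ d)
    (hφ : IntervalIntegrable φ volume c d) (k : ℝ) :
    ∫ x in c..d, |φ x| ≤ |∫ x in c..d, φ x| + 2 * ∫ x in c..d, |φ x - k| := by
  have hφk : IntervalIntegrable (fun x => φ x - k) volume c d := hφ.sub intervalIntegrable_const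
  have h₁ : ∫ x in c..d, |φ x| ≤ |k| * (d - c) + ∫ x in c..d, |φ x - k| := by
    calc ∫ x in c..d, |φ x| ≤ ∫ x in c..d, (|k| + |φ x - k|) :=
          integral_mono_on hcd hφ.abs (intervalIntegrable_const.add hφk.abs) fun x _ => by
            simpa using abs_add_le k (φ x - k)
      _ = |k| * (d - c) + ∫ x in c..d, |φ x - k| := by
          rw [integral_add intervalIntegrable_const hφk.abs, intervalIntegral.integral_const,
            smul_eq_mul, mul_comm]
  have h₂ : |k| * (d - c) ≤ |∫ x in c..d, φ x| + ∫ x in c..d, |φ x - k| := by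
    have hk : k * (d - c) = (∫ x in c..d, φ x) - ∫ x in c..d, (φ x - k) := by
      rw [integral_sub hφ intervalIntegrable_const, intervalIntegral.integral_const, smul_eq_mul]
      ring
    calc |k| * (d - c) = |k * (d - c)| := by rw [abs_mul, abs_of_nonneg (sub_nonneg.2 hcd)]
      _ ≤ |∫ x in c..d, φ x| + |∫ x in c..d, (φ x - k)| := hk ▸ abs_sub _ _
      _ ≤ _ := by gcongr; exact abs_integral_le_integral_abs hcd
  linarith

lemma integral_abs_sub_const_le_of_abs_sub_le {φ g : ℝ → ℝ} {c d k β : ℝ} (hcd : c ≤ d)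
    (hφ : IntervalIntegrable φ volume c d) (hg : IntervalIntegrable g volume c d)
    (hgk : ∀ x ∈ Icc c d, |g x - k| ≤ β) :
    ∫ x in c..d, |φ x - k| ≤ (∫ x in c..d, |φ x - g x|) + β * (d - c) := by
  have hφg : IntervalIntegrable (fun x => |φ x - g x|) volume c d := (hφ.sub hg).abs
  calc ∫ x in c..d, |φ x - k| ≤ ∫ x in c..d, (|φ x - g x| + β) :=
        integral_mono_on hcd (hφ.sub intervalIntegrable_const).abs
          (hφg.add intervalIntegrable_const) fun x hx => by
            linarith [abs_sub_le (φ x) (g x) k, hgk x hx]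
    _ = (∫ x in c..d, |φ x - g x|) + β * (d - c) := by
        rw [integral_add hφg intervalIntegrable_const, intervalIntegral.integral_const,
          smul_eq_mul, mul_comm]

lemma IntervalIntegrable.exists_continuous_integral_abs_sub_le {φ : ℝ → ℝ} {a b δ : ℝ}
    (hab : a ≤ b) (hφ : IntervalIntegrable φ volume a b) (hδ : 0 < δ) :
    ∃ g : ℝ → ℝ, Continuous g ∧ ∫ x in a..b, |φ x - g x| ≤ δ := by
  have hind : Integrable ((Ioc a b).indicator φ) := (integrable_indicator_iff measurableSet_Ioc).2
    ((intervalIntegrable_iff_integrableOn_Ioc_of_le hab).1 hφ)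
  obtain ⟨g, -, hg, hgc, hgi⟩ := hind.exists_hasCompactSupport_integral_sub_le hδ
  refine ⟨g, hgc, ?_⟩
  calc ∫ x in a..b, |φ x - g x| = ∫ x in Ioc a b, ‖(Ioc a b).indicator φ x - g x‖ := by
        rw [integral_of_le hab]
        refine setIntegral_congr_fun measurableSet_Ioc fun x hx => ?_
        rw [indicator_of_mem hx, Real.norm_eq_abs]
    _ ≤ ∫ x, ‖(Ioc a b).indicator φ x - g x‖ :=
        setIntegral_le_integral (hind.sub hgi).norm (.of_forall fun _ => norm_nonneg _)
    _ ≤ δ := hg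

theorem exists_integral_abs_le_sum_abs_integral_add {φ : ℝ → ℝ} {a b δ : ℝ} (hab : a < b)
    (hφ : IntervalIntegrable φ volume a b) (hδ : 0 < δ) :
    ∃ m : ℕ, 0 < m ∧ ∫ x in a..b, |φ x| ≤ ∑ i ∈ Finset.range m,
      |∫ x in uniformPartition a b m i..uniformPartition a b m (i + 1), φ x| + δ := by
  obtain ⟨g, hgc, hφg⟩ :=
    hφ.exists_continuous_integral_abs_sub_le hab.le (by positivity : 0 < δ / 4)
  set β := δ / (4 * (b - a)) with hβ
  have hba : 0 < b - a := sub_pos.2 hab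
  obtain ⟨η, hη, hgη⟩ := Metric.uniformContinuousOn_iff_le.1
    (isCompact_Icc.uniformContinuousOn_of_continuous hgc.continuousOn) β
    (by positivity)
  obtain ⟨m, hm⟩ := exists_nat_gt ((b - a) / η)
  have hm0 : (0 : ℝ) < m := (div_pos hba hη).trans hm
  set w := (b - a) / m with hw
  have hwη : w ≤ η := by
    rw [div_lt_iff₀ hη] at hm
    rw [hw, div_le_iff₀ hm0]; linarith
  set t := uniformPartition a b m with ht
  have ht_mem : ∀ i ≤ m, t i ∈ Icc a b := fun i hi => uniformPartition_mem_Icc hab.le hi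
  have ht_succ : ∀ i, t (i + 1) = t i + w := uniformPartition_succ m
  have ht_le : ∀ i, t i ≤ t (i + 1) := fun i => by rw [ht_succ]; linarith [hw ▸ div_pos hba hm0]
  have hsub : ∀ i < m, uIcc (t i) (t (i + 1)) ⊆ uIcc a b := fun i hi => by
    rw [uIcc_of_le hab.le]; exact uIcc_subset_Icc (ht_mem i hi.le) (ht_mem (i + 1) hi)
  have hsum : ∀ {ψ : ℝ → ℝ}, IntervalIntegrable ψ volume a b →
      ∑ i ∈ Finset.range m, ∫ x in t i..t (i + 1), ψ x = ∫ x in a..b, ψ x := fun hψ => by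
    rw [sum_integral_adjacent_intervals fun i hi => hψ.mono_set (hsub i hi), ht,
      uniformPartition_zero, uniformPartition_self (Nat.cast_pos.1 hm0).ne']
  have hφg_int : IntervalIntegrable (fun x => |φ x - g x|) volume a b :=
    (hφ.sub (hgc.intervalIntegrable a b)).abs
  have hlocal : ∀ i < m, ∫ x in t i..t (i + 1), |φ x - g (t i)| ≤
      (∫ x in t i..t (i + 1), |φ x - g x|) + β * w := fun i hi => by
    have hlen : t (i + 1) - t i = w := by rw [ht_succ]; ring
    refine hlen ▸ integral_abs_sub_const_le_of_abs_sub_le (ht_le i) (hφ.mono_set (hsub i hi))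
      (hgc.intervalIntegrable _ _) fun x hx => ?_
    have hx_mem : x ∈ Icc a b := Icc_subset_Icc (ht_mem i hi.le).1 (ht_mem (i + 1) hi).2 hx
    have hdist : dist x (t i) ≤ η := by
      rw [Real.dist_eq, abs_of_nonneg (by linarith [hx.1])]; linarith [hx.2, ht_succ i]
    simpa only [Real.dist_eq] using hgη x hx_mem (t i) (ht_mem i hi.le) hdist
  refine ⟨m, Nat.cast_pos.1 hm0, ?_⟩
  calc ∫ x in a..b, |φ x|
      = ∑ i ∈ Finset.range m, ∫ x in t i..t (i + 1), |φ x| := (hsum hφ.abs).symm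
    _ ≤ ∑ i ∈ Finset.range m,
          (|∫ x in t i..t (i + 1), φ x| + 2 * ∫ x in t i..t (i + 1), |φ x - g (t i)|) :=
        Finset.sum_le_sum fun i hi => integral_abs_le_abs_integral_add_integral_abs_sub (ht_le i)
          (hφ.mono_set (hsub i (Finset.mem_range.1 hi))) _
    _ ≤ ∑ i ∈ Finset.range m,
          (|∫ x in t i..t (i + 1), φ x| + 2 * ((∫ x in t i..t (i + 1), |φ x - g x|) + β * w)) := by
        gcongr with i hi; exact hlocal i (Finset.mem_range.1 hi)
    _ = ∑ i ∈ Finset.range m, |∫ x in t i..t (i + 1), φ x| +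
          2 * (∫ x in a..b, |φ x - g x|) + 2 * β * (m * w) := by
        rw [Finset.sum_add_distrib, ← Finset.mul_sum, Finset.sum_add_distrib, hsum hφg_int,
          Finset.sum_const, Finset.card_range, nsmul_eq_mul]
        ring
    _ ≤ ∑ i ∈ Finset.range m, |∫ x in t i..t (i + 1), φ x| + δ := by
        have : 2 * β * (m * w) = δ / 2 := by rw [hβ, hw]; field_simp; ring
        linarith

section

variable {F F' : ℝ → ℝ} {a b : ℝ}

lemma integral_eq_sub_of_hasDerivAt_of_mem_Icc (hF : ∀ x ∈ Icc a b, HasDerivAt F (F' x) x)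
    (hF' : IntervalIntegrable F' volume a b) {c d : ℝ} (hc : c ∈ Icc a b) (hd : d ∈ Icc a b) :
    ∫ x in c..d, F' x = F d - F c := by
  have hsub : uIcc c d ⊆ Icc a b := uIcc_subset_Icc hc hd
  refine integral_eq_sub_of_hasDerivAt (fun x hx => hF x (hsub hx)) (hF'.mono_set ?_)
  rwa [uIcc_of_le (hc.1.trans hc.2)]

lemma sum_abs_sub_le_integral_abs (hF : ∀ x ∈ Icc a b, HasDerivAt F (F' x) x)
    (hF' : IntervalIntegrable F' volume a b) {s : ℕ → ℝ} {m : ℕ} (hs : MonotoneOn s (Iic m))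
    (hs_mem : ∀ i ≤ m, s i ∈ Icc a b) :
    ∑ i ∈ Finset.range m, |F (s (i + 1)) - F (s i)| ≤ ∫ x in a..b, |F' x| := by
  have hab : a ≤ b := (hs_mem 0 (Nat.zero_le m)).1.trans (hs_mem 0 (Nat.zero_le m)).2
  have hsub : ∀ i < m, uIcc (s i) (s (i + 1)) ⊆ uIcc a b := fun i hi => by
    rw [uIcc_of_le hab]; exact uIcc_subset_Icc (hs_mem i hi.le) (hs_mem (i + 1) hi)
  calc ∑ i ∈ Finset.range m, |F (s (i + 1)) - F (s i)|
      ≤ ∑ i ∈ Finset.range m, ∫ x in s i..s (i + 1), |F' x| := by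
        refine Finset.sum_le_sum fun i hi => ?_
        have hi : i < m := Finset.mem_range.1 hi
        rw [← integral_eq_sub_of_hasDerivAt_of_mem_Icc hF hF' (hs_mem i hi.le) (hs_mem (i + 1) hi)]
        exact abs_integral_le_integral_abs (hs (mem_Iic.2 hi.le) (mem_Iic.2 hi) (Nat.le_succ i))
    _ = ∫ x in s 0..s m, |F' x| :=
        sum_integral_adjacent_intervals fun i hi => hF'.abs.mono_set (hsub i hi)
    _ ≤ ∫ x in a..b, |F' x| :=
        integral_mono_interval (hs_mem 0 (Nat.zero_le m)).1
          (hs (mem_Iic.2 (Nat.zero_le m)) (mem_Iic.2 le_rfl) (Nat.zero_le m)) (hs_mem m le_rfl).2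
          (.of_forall fun _ => abs_nonneg _) hF'.abs

end

lemma exists_mem_Icc_abs_sub_le_le_integral_div {g : ℝ → ℝ} {a b r x : ℝ} (hg : 0 ≤ g)
    (hg_int : IntervalIntegrable g volume a b) (hx : x ∈ Icc a b) (hr : 0 < r) (hrb : r ≤ b - a) :
    ∃ s ∈ Icc a b, |s - x| ≤ r ∧ g s ≤ (∫ y in a..b, g y) / r := by
  -- the window `[c, c + r]` lies in `[a, b]` and within `r` of `x`
  set c := min x (b - r)
  have hac : a ≤ c := le_min hx.1 (by linarith)
  have hcb : c + r ≤ b := by have := min_le_right x (b - r); linarith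
  have hxc : x - r ≤ c := le_min (by linarith) (by linarith [hx.2])
  have hcx : c ≤ x := min_le_left _ _
  have hab : a ≤ b := hx.1.trans hx.2
  have hg_on : IntegrableOn g (Icc a b) :=
    (intervalIntegrable_iff_integrableOn_Icc_of_le hab).1 hg_int
  obtain ⟨s, hs, hgs⟩ := exists_le_setAverage (by simp [hr]) (by simp)
    (hg_on.mono_set (Icc_subset_Icc hac hcb))
  refine ⟨s, Icc_subset_Icc hac hcb hs, abs_le.2 ⟨by linarith [hs.1], by linarith [hs.2]⟩, ?_⟩
  calc g s ≤ ⨍ y in Icc c (c + r), g y := hgs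
    _ = (∫ y in Icc c (c + r), g y) / r := by
        rw [setAverage_eq, Real.volume_real_Icc, add_sub_cancel_left, max_eq_left hr.le,
          smul_eq_mul, inv_mul_eq_div]
    _ ≤ (∫ y in a..b, g y) / r := by
        gcongr
        rw [integral_of_le hab, ← integral_Icc_eq_integral_Ioc]
        exact setIntegral_mono_set hg_on (.of_forall hg) (.of_forall (Icc_subset_Icc hac hcb))

lemma sum_abs_sub_le_integral_abs_add {f F F' : ℝ → ℝ} {a b ρ : ℝ} {t s : ℕ → ℝ} {m : ℕ}
    (hF : ∀ x ∈ Icc a b, HasDerivAt F (F' x) x) (hF' : IntervalIntegrable F' volume a b)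
    (hs : MonotoneOn s (Iic m)) (hs_mem : ∀ i ≤ m, s i ∈ Icc a b)
    (hnear : ∀ i ≤ m, |f (t i) - F (s i)| ≤ ρ) :
    ∑ i ∈ Finset.range m, |f (t (i + 1)) - f (t i)| ≤ (∫ x in a..b, |F' x|) + 2 * ρ * m := by
  have hstep : ∀ i < m, |f (t (i + 1)) - f (t i)| ≤ |F (s (i + 1)) - F (s i)| + 2 * ρ := by
    intro i hi
    have h₁ := abs_le.1 (hnear (i + 1) hi)
    have h₂ := abs_le.1 (hnear i hi.le)
    have h₃ := le_abs_self (F (s (i + 1)) - F (s i))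
    have h₄ := neg_abs_le (F (s (i + 1)) - F (s i))
    exact abs_le.2 ⟨by linarith, by linarith⟩
  calc ∑ i ∈ Finset.range m, |f (t (i + 1)) - f (t i)|
      ≤ ∑ i ∈ Finset.range m, (|F (s (i + 1)) - F (s i)| + 2 * ρ) :=
        Finset.sum_le_sum fun i hi => hstep i (Finset.mem_range.1 hi)
    _ = ∑ i ∈ Finset.range m, |F (s (i + 1)) - F (s i)| + 2 * ρ * m := by
        rw [Finset.sum_add_distrib, Finset.sum_const, Finset.card_range, nsmul_eq_mul, mul_comm]
    _ ≤ (∫ x in a..b, |F' x|) + 2 * ρ * m := by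
        gcongr
        exact sum_abs_sub_le_integral_abs hF hF' hs hs_mem

lemma exists_monotoneOn_near_of_integral_sq_sub_le {F f : ℝ → ℝ} {a b r ρ : ℝ} {t : ℕ → ℝ}
    {m : ℕ} (hFc : ContinuousOn F (Icc a b)) (hfc : ContinuousOn f (Icc a b)) (hr : 0 < r)
    (hrb : r ≤ b - a) (hρ : 0 ≤ ρ) (hFf : ∫ x in a..b, (F x - f x) ^ 2 ≤ ρ ^ 2 * r)
    (ht_mem : ∀ i ≤ m, t i ∈ Icc a b) (ht_gap : ∀ i j, i < j → j ≤ m → t i + 2 * r ≤ t j) :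
    ∃ s : ℕ → ℝ, MonotoneOn s (Iic m) ∧
      ∀ i ≤ m, s i ∈ Icc a b ∧ |s i - t i| ≤ r ∧ |F (s i) - f (s i)| ≤ ρ := by
  have hsample : ∀ i ≤ m, ∃ s ∈ Icc a b, |s - t i| ≤ r ∧ |F s - f s| ≤ ρ := by
    intro i hi
    obtain ⟨s, hs, hst, hFs⟩ := exists_mem_Icc_abs_sub_le_le_integral_div
      (fun x => sq_nonneg (F x - f x))
      (((hFc.sub hfc).pow 2).intervalIntegrable_of_Icc (by linarith)) (ht_mem i hi) hr hrb
    refine ⟨s, hs, hst, abs_le_of_sq_le_sq ?_ hρ⟩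
    calc (F s - f s) ^ 2 ≤ (∫ x in a..b, (F x - f x) ^ 2) / r := hFs
      _ ≤ ρ ^ 2 * r / r := by gcongr
      _ = ρ ^ 2 := mul_div_cancel_right₀ _ hr.ne'
  choose! s hs_mem hs_near hs_F using hsample
  refine ⟨s, fun i hi j hj hij => ?_, fun i hi => ⟨hs_mem i hi, hs_near i hi, hs_F i hi⟩⟩
  rcases hij.eq_or_lt with rfl | hij
  · rfl
  linarith [abs_le.1 (hs_near i hi), abs_le.1 (hs_near j hj), ht_gap i j hij hj]

theorem exists_integral_abs_deriv_le_of_integral_sq_sub_lt {f f' : ℝ → ℝ} {a b δ : ℝ}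
    (hab : a < b) (hf : ∀ x ∈ Icc a b, HasDerivAt f (f' x) x)
    (hf' : IntervalIntegrable f' volume a b) (hδ : 0 < δ) :
    ∃ ε > 0, ∀ F F' : ℝ → ℝ, (∀ x ∈ Icc a b, HasDerivAt F (F' x) x) →
      IntervalIntegrable F' volume a b → (∫ x in a..b, (F x - f x) ^ 2) < ε ^ 2 →
      ∫ x in a..b, |f' x| ≤ (∫ x in a..b, |F' x|) + δ := by
  obtain ⟨m, hm, hpart⟩ := exists_integral_abs_le_sum_abs_integral_add hab hf' (half_pos hδ)
  set t := uniformPartition a b m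
  have ht_mem : ∀ i ≤ m, t i ∈ Icc a b := fun i hi => uniformPartition_mem_Icc hab.le hi
  have hm0 : (0 : ℝ) < m := Nat.cast_pos.2 hm
  set ρ := δ / (8 * m) with hρ
  have hρ0 : 0 < ρ := by positivity
  have hfc : ContinuousOn f (Icc a b) := fun x hx => (hf x hx).continuousAt.continuousWithinAt
  obtain ⟨η, hη, hfη⟩ := Metric.uniformContinuousOn_iff_le.1
    (isCompact_Icc.uniformContinuousOn_of_continuous hfc) ρ hρ0
  set w := (b - a) / m
  have hw0 : 0 < w := div_pos (sub_pos.2 hab) hm0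
  set r := min η (w / 2)
  have hr0 : 0 < r := lt_min hη (half_pos hw0)
  have hrb : r ≤ b - a := by
    have : w ≤ b - a := div_le_self (sub_pos.2 hab).le (Nat.one_le_cast.2 hm)
    linarith [min_le_right η (w / 2)]
  have ht_gap : ∀ i j, i < j → j ≤ m → t i + 2 * r ≤ t j := fun i j hij _ => by
    have : w ≤ t j - t i := by
      rw [uniformPartition_sub hij.le]
      exact le_mul_of_one_le_left hw0.le (Nat.one_le_cast.2 (Nat.sub_pos_of_lt hij))
    linarith [min_le_right η (w / 2)]
  refine ⟨ρ * √r, by positivity, fun F F' hF hF' hFf => ?_⟩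
  have hFc : ContinuousOn F (Icc a b) := fun x hx => (hF x hx).continuousAt.continuousWithinAt
  have hFf' : ∫ x in a..b, (F x - f x) ^ 2 ≤ ρ ^ 2 * r := by
    rw [mul_pow, Real.sq_sqrt hr0.le] at hFf; exact hFf.le
  obtain ⟨s, hs_mono, hs⟩ := exists_monotoneOn_near_of_integral_sq_sub_le hFc hfc hr0 hrb
    hρ0.le hFf' ht_mem ht_gap
  have hnear : ∀ i ≤ m, |f (t i) - F (s i)| ≤ 2 * ρ := fun i hi => by
    obtain ⟨hs_mem, hs_near, hs_F⟩ := hs i hi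
    have hdist : dist (t i) (s i) ≤ η := by
      rw [Real.dist_eq, abs_sub_comm]; exact hs_near.trans (min_le_left _ _)
    have hf_near := hfη _ (ht_mem i hi) _ hs_mem hdist
    rw [Real.dist_eq] at hf_near
    calc |f (t i) - F (s i)| ≤ |f (t i) - f (s i)| + |f (s i) - F (s i)| := abs_sub_le _ _ _
      _ ≤ 2 * ρ := by rw [abs_sub_comm (f (s i))]; linarith [hs_F]
  calc ∫ x in a..b, |f' x|
      ≤ ∑ i ∈ Finset.range m, |∫ x in t i..t (i + 1), f' x| + δ / 2 := hpart
    _ = ∑ i ∈ Finset.range m, |f (t (i + 1)) - f (t i)| + δ / 2 := by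
        congr 1
        refine Finset.sum_congr rfl fun i hi => ?_
        have hi : i < m := Finset.mem_range.1 hi
        rw [integral_eq_sub_of_hasDerivAt_of_mem_Icc hf hf' (ht_mem i hi.le) (ht_mem (i + 1) hi)]
    _ ≤ (∫ x in a..b, |F' x|) + 2 * (2 * ρ) * m + δ / 2 := by
        gcongr
        exact sum_abs_sub_le_integral_abs_add hF hF' hs_mono (fun i hi => (hs i hi).1) hnear
    _ = (∫ x in a..b, |F' x|) + δ := by rw [hρ]; field_simp; ring

theorem stmt_5_general (a b C : ℝ) (N : ℕ) (f f' : ℝ → ℝ)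
    (hf : ∀ x ∈ Set.Icc a b, HasDerivAt f (f' x) x)
    (hf'int : IntervalIntegrable f' volume a b)
    (happrox : ∀ ε > (0 : ℝ), ∃ F F' : ℝ → ℝ,
      (∀ x ∈ Set.Icc a b, HasDerivAt F (F' x) x) ∧
      IntervalIntegrable F' volume a b ∧
      (∫ x in a..b, (F x - f x) ^ 2) < ε ^ 2 ∧
      (∫ x in a..b, (F' x - f' x) ^ 2) < ε ^ 2 ∧
      Zcount a b f = Zcount a b F ∧
      Zcount a b F ≤ N ∧
      MC a b F F' ≤ C) :
    MC a b f f' ≤ C := by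
  obtain ⟨F₀, F₀', -, -, -, -, hZ₀, -, hMC₀⟩ := happrox 1 one_pos
  rcases (Zcount a b f).eq_zero_or_pos with hZ | hZ
  · simpa only [MC, ← hZ₀, hZ, Nat.cast_zero, zero_mul] using hMC₀
  obtain ⟨x, hx, -⟩ := nonempty_of_ncard_ne_zero hZ.ne'
  have hZ' : (0 : ℝ) < Zcount a b f := Nat.cast_pos.2 hZ
  refine le_of_forall_pos_le_add fun δ hδ => ?_
  obtain ⟨ε, hε, hlsc⟩ := exists_integral_abs_deriv_le_of_integral_sq_sub_lt (hx.1.trans hx.2)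
    hf hf'int (div_pos hδ hZ')
  obtain ⟨F, F', hF, hF'int, hFf, -, hZF, -, hMC⟩ := happrox ε hε
  calc MC a b f f' ≤ Zcount a b f * ((∫ x in a..b, |F' x|) + δ / Zcount a b f) :=
        mul_le_mul_of_nonneg_left (hlsc F F' hF hF'int hFf) hZ'.le
    _ = MC a b F F' + δ := by rw [MC, ← hZF]; field_simp
    _ ≤ C + δ := by linarith

theorem stmt_5 (a b C : ℝ) (N : ℕ) (hab : a ≤ b) (f f' : ℝ → ℝ)
    (hf : ∀ x ∈ Set.Icc a b, HasDerivAt f (f' x) x)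
    (hf'int : IntervalIntegrable f' volume a b)
    (happrox : ∀ ε > (0 : ℝ), ∃ F F' : ℝ → ℝ,
      (∀ x ∈ Set.Icc a b, HasDerivAt F (F' x) x) ∧
      IntervalIntegrable F' volume a b ∧
      (∫ x in a..b, (F x - f x) ^ 2) < ε ^ 2 ∧
      (∫ x in a..b, (F' x - f' x) ^ 2) < ε ^ 2 ∧
      Zcount a b f = Zcount a b F ∧
      Zcount a b F ≤ N ∧
      MC a b F F' ≤ C) :
    MC a b f f' ≤ C :=
  stmt_5_general a b C N f f' hf hf'int happrox
end

section
/- Let H be a real Hilbert space, e ∈ H nonzero, φ ∈ H with 0 < ‖φ‖ ≤ b_φ, and suppose ⟨e, φ⟩² ≥ b_φ² δ where δ = (1 - r - μ)‖e‖² for some 0 < r < 1 and 0 ≤ μ ≤ 1 - r. Then with β* = ⟨e, φ⟩ / ‖φ‖², the new residual e' = e - β* φ satisfies ‖e'‖² ≤ (r + μ)‖e‖². -/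
theorem norm_sub_inner_div_norm_sq_smul_sq {H : Type*} [NormedAddCommGroup H]
    [InnerProductSpace ℝ H] (x v : H) :
    ‖x - (inner ℝ x v / ‖v‖ ^ 2) • v‖ ^ 2 = ‖x‖ ^ 2 - inner ℝ x v ^ 2 / ‖v‖ ^ 2 := by
  rcases eq_or_ne v 0 with rfl | hv
  · simp
  have hv2 : ‖v‖ ^ 2 ≠ 0 := by positivity
  rw [norm_sub_sq_real, inner_smul_right, norm_smul, Real.norm_eq_abs, mul_pow, sq_abs]
  field_simp
  ring

theorem le_div_sq_of_sq_mul_le {a b c δ : ℝ} (ha : 0 < a) (hab : a ≤ b) (hc : 0 ≤ c)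
    (h : b ^ 2 * δ ≤ c) : δ ≤ c / a ^ 2 := by
  rw [le_div_iff₀ (by positivity)]
  rcases le_or_gt δ 0 with hδ | hδ
  · nlinarith
  · nlinarith [pow_le_pow_left₀ ha.le hab 2]

theorem stmt_7_general {H : Type*} [NormedAddCommGroup H] [InnerProductSpace ℝ H]
    (e φ : H) (bφ r μ δ : ℝ) (hφ0 : 0 < ‖φ‖) (hφb : ‖φ‖ ≤ bφ)
    (hδ : δ = (1 - r - μ) * ‖e‖ ^ 2)
    (hineq : bφ ^ 2 * δ ≤ (inner ℝ e φ : ℝ) ^ 2) :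
    ‖e - ((inner ℝ e φ : ℝ) / ‖φ‖ ^ 2) • φ‖ ^ 2 ≤ (r + μ) * ‖e‖ ^ 2 := by
  calc ‖e - ((inner ℝ e φ : ℝ) / ‖φ‖ ^ 2) • φ‖ ^ 2
      = ‖e‖ ^ 2 - (inner ℝ e φ : ℝ) ^ 2 / ‖φ‖ ^ 2 := norm_sub_inner_div_norm_sq_smul_sq e φ
    _ ≤ ‖e‖ ^ 2 - δ := by
      gcongr
      exact le_div_sq_of_sq_mul_le hφ0 hφb (sq_nonneg _) hineq
    _ = (r + μ) * ‖e‖ ^ 2 := by rw [hδ]; ring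

theorem stmt_7 {H : Type*} [NormedAddCommGroup H] [InnerProductSpace ℝ H]
    (e φ : H) (bφ r μ δ : ℝ) (he : e ≠ 0) (hφ0 : 0 < ‖φ‖) (hφb : ‖φ‖ ≤ bφ)
    (hr0 : 0 < r) (hr1 : r < 1) (hμ0 : 0 ≤ μ) (hμ : μ ≤ 1 - r)
    (hδ : δ = (1 - r - μ) * ‖e‖ ^ 2)
    (hineq : bφ ^ 2 * δ ≤ (inner ℝ e φ : ℝ) ^ 2) :
    ‖e - ((inner ℝ e φ : ℝ) / ‖φ‖ ^ 2) • φ‖ ^ 2 ≤ (r + μ) * ‖e‖ ^ 2 :=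
  stmt_7_general e φ bφ r μ δ hφ0 hφb hδ hineq
end
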